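/- Let X have density c₁·W(x;α₁,β,γ) + c₂·W(x;α₂,β,γ) and Y have density c₁'·W(y;a₁,β,γ) + c₂'·W(y;a₂,β,γ), where W(·;α,β,γ) denotes the Weibull density, c₁+c₂ = 1, c₁'+c₂' = 1, all weights in [0,1], all scale parameters positive, the same β and γ > 0, and X, Y independent. Then P(X > Y) = Σ_{i=1}^2 Σ_{j=1}^2 c_i c_j' · α_i^γ / (α_i^γ + a_j^γ). -/

import Mathlib

open MeasureTheory ProbabilityTheory Real

noncomputable def weibullPDF (α β γ x : ℝ) : ℝ :=
  if β ≤ x then (γ / α) * ((x - β) / α) ^ (γ - 1) * Real.exp (-((x - β) / α) ^ γ) else 0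

open Set Filter Topology
open scoped ENNReal

/-!
Given `Y = y ≥ β`, a Weibull variable of scale `α` exceeds `y` with probability
`exp (-u ^ γ)`, `u = (y - β) / α`, and `u ^ γ = r * ((y - β) / a) ^ γ` with `r = (a / α) ^ γ`.
Against a Weibull density `w` of scale `a`, the integrand `w · exp (-k v ^ γ)`, `v = (y - β) / a`,
has the closed-form antiderivative `-exp (-(1 + k) v ^ γ) / (1 + k)`; hence
`P(X > Y) = 1 / (1 + r) = α ^ γ / (α ^ γ + a ^ γ)` for pure Weibull laws, and the mixture case
follows since the product measure is bilinear in its factors.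
-/

lemma withDensity_ofReal_add {E : Type*} [MeasurableSpace E] {μ : Measure E} {f g : E → ℝ}
    (hf : Measurable f) (hf₀ : ∀ x, 0 ≤ f x) (hg₀ : ∀ x, 0 ≤ g x) {c d : ℝ} (hc : 0 ≤ c)
    (hd : 0 ≤ d) :
    μ.withDensity (fun x => ENNReal.ofReal (c * f x + d * g x)) =
      ENNReal.ofReal c • μ.withDensity (fun x => ENNReal.ofReal (f x)) +
        ENNReal.ofReal d • μ.withDensity (fun x => ENNReal.ofReal (g x)) := by
  rw [← withDensity_smul' _ _ ENNReal.ofReal_ne_top, ← withDensity_smul' _ _ ENNReal.ofReal_ne_top,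
    ← withDensity_add_left (hf.ennreal_ofReal.const_smul _)]
  congr 1
  funext x
  simp only [Pi.add_apply, Pi.smul_apply, smul_eq_mul]
  rw [ENNReal.ofReal_add (mul_nonneg hc (hf₀ x)) (mul_nonneg hd (hg₀ x)), ENNReal.ofReal_mul hc,
    ENNReal.ofReal_mul hd]

lemma Measure.prod_add_smul_apply {E F : Type*} [MeasurableSpace E] [MeasurableSpace F]
    (μ₁ μ₂ : Measure E) (ν₁ ν₂ : Measure F) [SFinite μ₁] [SFinite μ₂] [SFinite ν₁] [SFinite ν₂]
    (c₁ c₂ d₁ d₂ : ℝ≥0∞) (s : Set (E × F)) :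
    (c₁ • μ₁ + c₂ • μ₂).prod (d₁ • ν₁ + d₂ • ν₂) s =
      c₁ * d₁ * μ₁.prod ν₁ s + c₁ * d₂ * μ₁.prod ν₂ s + c₂ * d₁ * μ₂.prod ν₁ s +
        c₂ * d₂ * μ₂.prod ν₂ s := by
  simp only [Measure.add_prod, Measure.prod_add, Measure.prod_smul_left, Measure.prod_smul_right,
    Measure.add_apply, Measure.smul_apply, smul_eq_mul]
  ring

section Weibull

variable {α a β γ : ℝ}

lemma measurable_weibullPDF (α β γ : ℝ) : Measurable (weibullPDF α β γ) :=
  Measurable.ite (measurableSet_le measurable_const measurable_id) (by fun_prop) measurable_const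

lemma weibullPDF_nonneg (hα : 0 ≤ α) (hγ : 0 ≤ γ) (x : ℝ) : 0 ≤ weibullPDF α β γ x := by
  unfold weibullPDF
  split_ifs with hx
  · have : 0 ≤ (x - β) / α := div_nonneg (sub_nonneg.2 hx) hα
    positivity
  · exact le_rfl

lemma continuous_div_sub_rpow (α β : ℝ) (hγ : 0 ≤ γ) :
    Continuous fun x : ℝ => ((x - β) / α) ^ γ :=
  (Real.continuous_rpow_const hγ).comp (by fun_prop)

lemma tendsto_div_sub_rpow_atTop (hα : 0 < α) (hγ : 0 < γ) (β : ℝ) :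
    Tendsto (fun x : ℝ => ((x - β) / α) ^ γ) atTop atTop :=
  (tendsto_rpow_atTop hγ).comp
    ((tendsto_atTop_add_const_right atTop (-β) tendsto_id).atTop_div_const hα)

lemma hasDerivAt_div_sub_rpow (hα : α ≠ 0) (γ : ℝ) {x : ℝ} (hx : β < x) :
    HasDerivAt (fun t : ℝ => ((t - β) / α) ^ γ) (γ * ((x - β) / α) ^ (γ - 1) / α) x := by
  have hne : (x - β) / α ≠ 0 := div_ne_zero (sub_pos.2 hx).ne' hα
  simpa [Function.comp_def, div_eq_mul_inv, mul_assoc] using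
    (Real.hasDerivAt_rpow_const (p := γ) (Or.inl hne)).comp x
      (((hasDerivAt_id x).sub_const β).div_const α)

lemma hasDerivAt_weibull_antideriv (hα : α ≠ 0) {k : ℝ} (hk : 1 + k ≠ 0) {x : ℝ} (hx : β < x) :
    HasDerivAt (fun t => -exp (-((1 + k) * ((t - β) / α) ^ γ)) / (1 + k))
      (weibullPDF α β γ x * exp (-(k * ((x - β) / α) ^ γ))) x := by
  have h := ((((hasDerivAt_div_sub_rpow hα γ hx).const_mul (1 + k)).neg.exp).neg).div_const (1 + k)
  refine h.congr_deriv ?_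
  rw [weibullPDF, if_pos hx.le, mul_assoc _ (exp _), ← exp_add]
  simp only [Pi.neg_apply]
  field_simp
  ring_nf

lemma lintegral_Ioi_weibullPDF_mul_exp (hα : 0 < α) (hγ : 0 < γ) {k : ℝ} (hk : 0 < 1 + k)
    {y : ℝ} (hy : β ≤ y) :
    ∫⁻ x in Ioi y, ENNReal.ofReal (weibullPDF α β γ x * exp (-(k * ((x - β) / α) ^ γ))) =
      ENNReal.ofReal (exp (-((1 + k) * ((y - β) / α) ^ γ)) / (1 + k)) := by
  have hcont : ContinuousWithinAt (fun t => -exp (-((1 + k) * ((t - β) / α) ^ γ)) / (1 + k))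
      (Ici y) y := by
    have := continuous_div_sub_rpow α β hγ.le
    exact Continuous.continuousWithinAt (by fun_prop)
  have hderiv : ∀ x ∈ Ioi y, HasDerivAt (fun t => -exp (-((1 + k) * ((t - β) / α) ^ γ)) / (1 + k))
      (weibullPDF α β γ x * exp (-(k * ((x - β) / α) ^ γ))) x :=
    fun x hx => hasDerivAt_weibull_antideriv hα.ne' hk.ne' (hy.trans_lt hx)
  have hnonneg : ∀ x ∈ Ioi y, 0 ≤ weibullPDF α β γ x * exp (-(k * ((x - β) / α) ^ γ)) :=
    fun x _ => mul_nonneg (weibullPDF_nonneg hα.le hγ.le x) (exp_pos _).le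
  have hlim : Tendsto (fun t => -exp (-((1 + k) * ((t - β) / α) ^ γ)) / (1 + k)) atTop (𝓝 0) := by
    have := (tendsto_exp_atBot.comp (tendsto_neg_atTop_atBot.comp
      ((tendsto_div_sub_rpow_atTop hα hγ β).const_mul_atTop hk))).neg.div_const (1 + k)
    simpa [Function.comp_def] using this
  rw [← ofReal_integral_eq_lintegral_ofReal
      (integrableOn_Ioi_deriv_of_nonneg hcont hderiv hnonneg hlim)
      ((ae_restrict_iff' measurableSet_Ioi).2 (ae_of_all _ hnonneg)),
    integral_Ioi_of_hasDerivAt_of_nonneg hcont hderiv hnonneg hlim, zero_sub, neg_div, neg_neg]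

noncomputable def weibullMeasure (α β γ : ℝ) : Measure ℝ :=
  volume.withDensity fun x => ENNReal.ofReal (weibullPDF α β γ x)

instance : SFinite (weibullMeasure α β γ) := by
  unfold weibullMeasure
  infer_instance

lemma withDensity_weibullPDF_mixture {α₁ α₂ c₁ c₂ : ℝ} (hα₁ : 0 < α₁) (hα₂ : 0 < α₂)
    (hγ : 0 < γ) (hc₁ : 0 ≤ c₁) (hc₂ : 0 ≤ c₂) :
    volume.withDensity
        (fun x => ENNReal.ofReal (c₁ * weibullPDF α₁ β γ x + c₂ * weibullPDF α₂ β γ x)) =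
      ENNReal.ofReal c₁ • weibullMeasure α₁ β γ + ENNReal.ofReal c₂ • weibullMeasure α₂ β γ :=
  withDensity_ofReal_add (measurable_weibullPDF α₁ β γ) (weibullPDF_nonneg hα₁.le hγ.le)
    (weibullPDF_nonneg hα₂.le hγ.le) hc₁ hc₂

lemma lintegral_weibullMeasure (g : ℝ → ℝ≥0∞) :
    ∫⁻ x, g x ∂weibullMeasure α β γ = ∫⁻ x in Ioi β, ENNReal.ofReal (weibullPDF α β γ x) * g x := by
  rw [weibullMeasure, lintegral_withDensity_eq_lintegral_mul_non_measurable _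
      (measurable_weibullPDF α β γ).ennreal_ofReal (ae_of_all _ fun _ => ENNReal.ofReal_lt_top),
    ← setLIntegral_eq_of_support_subset (s := Ici β), setLIntegral_congr Ioi_ae_eq_Ici]
  · rfl
  · intro x hx
    by_contra hxβ
    simp [weibullPDF, not_le.2 (notMem_Ici.1 hxβ)] at hx

lemma weibullMeasure_Ioi (hα : 0 < α) (hγ : 0 < γ) {y : ℝ} (hy : β ≤ y) :
    weibullMeasure α β γ (Ioi y) = ENNReal.ofReal (exp (-((y - β) / α) ^ γ)) := by
  have h := lintegral_Ioi_weibullPDF_mul_exp hα hγ (k := 0) (by norm_num) hy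
  simp only [zero_mul, neg_zero, exp_zero, mul_one, add_zero, one_mul, div_one] at h
  rw [weibullMeasure, withDensity_apply _ measurableSet_Ioi, h]

lemma weibullMeasure_prod_lt (hα : 0 < α) (ha : 0 < a) (hγ : 0 < γ) :
    (weibullMeasure α β γ).prod (weibullMeasure a β γ) {p | p.2 < p.1} =
      ENNReal.ofReal (α ^ γ / (α ^ γ + a ^ γ)) := by
  set r := (a / α) ^ γ with hr_def
  have hscale : ∀ y ∈ Ioi β, ((y - β) / α) ^ γ = r * ((y - β) / a) ^ γ := by
    intro y hy
    rw [← mul_rpow (by positivity) (div_nonneg (sub_nonneg.2 hy.out.le) ha.le)]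
    congr 1
    field_simp
  calc (weibullMeasure α β γ).prod (weibullMeasure a β γ) {p | p.2 < p.1}
      = ∫⁻ y in Ioi β, ENNReal.ofReal (weibullPDF a β γ y) * weibullMeasure α β γ (Ioi y) := by
        rw [Measure.prod_apply_symm (measurableSet_lt measurable_snd measurable_fst),
          lintegral_weibullMeasure]
        rfl
    _ = ∫⁻ y in Ioi β, ENNReal.ofReal (weibullPDF a β γ y * exp (-(r * ((y - β) / a) ^ γ))) := by
        refine setLIntegral_congr_fun measurableSet_Ioi fun y hy => ?_
        rw [weibullMeasure_Ioi hα hγ hy.out.le, ENNReal.ofReal_mul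
          (weibullPDF_nonneg ha.le hγ.le y), hscale y hy]
    _ = ENNReal.ofReal (1 / (1 + r)) := by
        rw [lintegral_Ioi_weibullPDF_mul_exp ha hγ (by positivity) le_rfl, sub_self, zero_div,
          zero_rpow hγ.ne', mul_zero, neg_zero, exp_zero]
    _ = ENNReal.ofReal (α ^ γ / (α ^ γ + a ^ γ)) := by
        have : 0 < α ^ γ := by positivity
        rw [hr_def, div_rpow ha.le hα.le]
        field_simp

end Weibull

theorem pythagorean_mixture_weibull_general
    {Ω : Type*} [MeasureSpace Ω] [IsProbabilityMeasure (ℙ : Measure Ω)]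
    (α₁ α₂ a₁ a₂ β γ c₁ c₂ c₁' c₂' : ℝ)
    (hα₁ : 0 < α₁) (hα₂ : 0 < α₂) (ha₁ : 0 < a₁) (ha₂ : 0 < a₂) (hγ : 0 < γ)
    (hc₁ : 0 ≤ c₁) (hc₂ : 0 ≤ c₂)
    (hc₁' : 0 ≤ c₁') (hc₂' : 0 ≤ c₂')
    (X Y : Ω → ℝ) (hX : Measurable X) (hY : Measurable Y)
    (hXd : Measure.map X ℙ = volume.withDensity (fun x =>
      ENNReal.ofReal (c₁ * weibullPDF α₁ β γ x + c₂ * weibullPDF α₂ β γ x)))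
    (hYd : Measure.map Y ℙ = volume.withDensity (fun y =>
      ENNReal.ofReal (c₁' * weibullPDF a₁ β γ y + c₂' * weibullPDF a₂ β γ y)))
    (hind : IndepFun X Y ℙ) :
    ℙ {ω | X ω > Y ω} = ENNReal.ofReal
      (c₁ * c₁' * (α₁ ^ γ / (α₁ ^ γ + a₁ ^ γ)) +
       c₁ * c₂' * (α₁ ^ γ / (α₁ ^ γ + a₂ ^ γ)) +
       c₂ * c₁' * (α₂ ^ γ / (α₂ ^ γ + a₁ ^ γ)) +
       c₂ * c₂' * (α₂ ^ γ / (α₂ ^ γ + a₂ ^ γ))) := by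
  have hlt : MeasurableSet {p : ℝ × ℝ | p.2 < p.1} := measurableSet_lt measurable_snd measurable_fst
  have hjoint := (indepFun_iff_map_prod_eq_prod_map_map hX.aemeasurable hY.aemeasurable).1 hind
  rw [show {ω | X ω > Y ω} = (fun ω => (X ω, Y ω)) ⁻¹' {p | p.2 < p.1} from rfl,
    ← Measure.map_apply (hX.prodMk hY) hlt, hjoint, hXd, hYd,
    withDensity_weibullPDF_mixture hα₁ hα₂ hγ hc₁ hc₂,
    withDensity_weibullPDF_mixture ha₁ ha₂ hγ hc₁' hc₂', Measure.prod_add_smul_apply,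
    weibullMeasure_prod_lt hα₁ ha₁ hγ, weibullMeasure_prod_lt hα₁ ha₂ hγ,
    weibullMeasure_prod_lt hα₂ ha₁ hγ, weibullMeasure_prod_lt hα₂ ha₂ hγ]
  simp (disch := positivity) only [ENNReal.ofReal_add, ENNReal.ofReal_mul]

theorem pythagorean_mixture_weibull
    {Ω : Type*} [MeasureSpace Ω] [IsProbabilityMeasure (ℙ : Measure Ω)]
    (α₁ α₂ a₁ a₂ β γ c₁ c₂ c₁' c₂' : ℝ)
    (hα₁ : 0 < α₁) (hα₂ : 0 < α₂) (ha₁ : 0 < a₁) (ha₂ : 0 < a₂) (hγ : 0 < γ)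
    (hc₁ : 0 ≤ c₁) (hc₁1 : c₁ ≤ 1) (hc₂ : 0 ≤ c₂) (hc₂1 : c₂ ≤ 1)
    (hc₁' : 0 ≤ c₁') (hc₁'1 : c₁' ≤ 1) (hc₂' : 0 ≤ c₂') (hc₂'1 : c₂' ≤ 1)
    (hsum : c₁ + c₂ = 1) (hsum' : c₁' + c₂' = 1)
    (X Y : Ω → ℝ) (hX : Measurable X) (hY : Measurable Y)
    (hXd : Measure.map X ℙ = volume.withDensity (fun x =>
      ENNReal.ofReal (c₁ * weibullPDF α₁ β γ x + c₂ * weibullPDF α₂ β γ x)))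
    (hYd : Measure.map Y ℙ = volume.withDensity (fun y =>
      ENNReal.ofReal (c₁' * weibullPDF a₁ β γ y + c₂' * weibullPDF a₂ β γ y)))
    (hind : IndepFun X Y ℙ) :
    ℙ {ω | X ω > Y ω} = ENNReal.ofReal
      (c₁ * c₁' * (α₁ ^ γ / (α₁ ^ γ + a₁ ^ γ)) +
       c₁ * c₂' * (α₁ ^ γ / (α₁ ^ γ + a₂ ^ γ)) +
       c₂ * c₁' * (α₂ ^ γ / (α₂ ^ γ + a₁ ^ γ)) +
       c₂ * c₂' * (α₂ ^ γ / (α₂ ^ γ + a₂ ^ γ))) :=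
  pythagorean_mixture_weibull_general α₁ α₂ a₁ a₂ β γ c₁ c₂ c₁' c₂' hα₁ hα₂ ha₁ ha₂ hγ hc₁ hc₂ hc₁'
    hc₂' X Y hX hY hXd hYd hind
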